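/- Let Δ > 0, λ > 0, and 0 ≤ L₁ < L₂ be real numbers, and let j, k, i be integers with 1 ≤ j ≤ k < i. Set μ = Δ(L₂² - L₁²)λ and C = Σ_{l=j}^{i-1} e^{-μ} μ^l / l!, assume C ≠ 0, and define f(r) = (2Δλ r / C) · e^{-μ} · ( (Δ(r² - L₁²)λ)^{k-1} / (k-1)! ) · Σ_{l=0}^{i-k-1} (Δ(L₂² - r²)λ)^l / l!. Then ∫_{L₁}^{L₂} f(r) dr = ( Σ_{m=k}^{i-1} e^{-μ} μ^m / m! ) / C. In particular, when k = j this integral equals 1. -/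

import Mathlib

/-!
The substitution `x = Δλ(r² - L₁²)` (the mean number of users within distance `r`) turns the
integral into `e^{-μ}/C · ∫₀^μ x^{k-1}/(k-1)! · ∑_{l<i-k} (μ-x)^l/l! dx`. Each summand is a Beta
integral, `∫₀^μ x^p/p! · (μ-x)^q/q! dx = μ^{p+q+1}/(p+q+1)!` (integrate by parts `q` times), so
the whole sum collapses to the Poisson tail `∑_{m=k}^{i-1} μ^m/m!`.
-/

open Finset Real intervalIntegral
open scoped Nat

theorem hasDerivAt_pow_succ_div_factorial (n : ℕ) (x : ℝ) :
    HasDerivAt (fun y : ℝ => y ^ (n + 1) / (n + 1)!) (x ^ n / n !) x := by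
  refine ((hasDerivAt_pow (n + 1) x).div_const _).congr_deriv ?_
  rw [Nat.factorial_succ, Nat.cast_mul, Nat.add_sub_cancel, mul_div_mul_left]
  exact_mod_cast n.succ_ne_zero

theorem hasDerivAt_sub_pow_succ_div_factorial (μ : ℝ) (n : ℕ) (x : ℝ) :
    HasDerivAt (fun y : ℝ => (μ - y) ^ (n + 1) / (n + 1)!) (-((μ - x) ^ n / n !)) x := by
  simpa [Function.comp_def] using (hasDerivAt_pow_succ_div_factorial n (μ - x)).comp x
    ((hasDerivAt_id x).const_sub μ)

theorem integral_pow_div_factorial_mul_sub_pow_div_factorial (μ : ℝ) (p q : ℕ) :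
    ∫ x in 0..μ, x ^ p / p ! * ((μ - x) ^ q / q !) = μ ^ (p + q + 1) / (p + q + 1)! := by
  induction q generalizing p with
  | zero =>
    simp only [pow_zero, Nat.factorial_zero, Nat.cast_one, div_one, mul_one, add_zero]
    rw [integral_eq_sub_of_hasDerivAt (fun x _ => hasDerivAt_pow_succ_div_factorial p x)
      ((by fun_prop : Continuous fun x : ℝ => x ^ p / p !).intervalIntegrable _ _)]
    simp
  | succ q ih =>
    have hparts := integral_mul_deriv_eq_deriv_mul (a := 0) (b := μ)
      (fun x _ => hasDerivAt_sub_pow_succ_div_factorial μ q x)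
      (fun x _ => hasDerivAt_pow_succ_div_factorial p x)
      ((by fun_prop : Continuous fun x : ℝ => -((μ - x) ^ q / q !)).intervalIntegrable _ _)
      ((by fun_prop : Continuous fun x : ℝ => x ^ p / p !).intervalIntegrable _ _)
    calc ∫ x in 0..μ, x ^ p / p ! * ((μ - x) ^ (q + 1) / (q + 1)!)
        = ∫ x in 0..μ, x ^ (p + 1) / (p + 1)! * ((μ - x) ^ q / q !) := by
          simpa [mul_comm] using hparts
      _ = μ ^ (p + (q + 1) + 1) / (p + (q + 1) + 1)! := by
          rw [ih, add_right_comm p 1 q, add_assoc p]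

theorem integral_pow_div_factorial_mul_sum_range (μ : ℝ) (p n : ℕ) :
    ∫ x in 0..μ, x ^ p / p ! * ∑ l ∈ range n, (μ - x) ^ l / l ! =
      ∑ m ∈ Ico (p + 1) (p + 1 + n), μ ^ m / m ! := by
  simp_rw [mul_sum]
  rw [integral_finsetSum fun l _ => Continuous.intervalIntegrable (by fun_prop) _ _,
    sum_Ico_eq_sum_range, Nat.add_sub_cancel_left]
  refine sum_congr rfl fun l _ => ?_
  rw [integral_pow_div_factorial_mul_sub_pow_div_factorial, add_right_comm]

theorem stmt_4_general (Δ lam L₁ L₂ : ℝ) (j k i : ℕ) (hj : 1 ≤ j) (hjk : j ≤ k) (hki : k < i)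
    (μ C : ℝ) (hμ : μ = Δ * (L₂ ^ 2 - L₁ ^ 2) * lam)
    (hC : C = ∑ l ∈ Finset.Ico j i, Real.exp (-μ) * μ ^ l / (l.factorial : ℝ))
    (hC0 : C ≠ 0)
    (f : ℝ → ℝ)
    (hf : ∀ r, f r = (2 * Δ * lam * r / C) * Real.exp (-μ) *
      ((Δ * (r ^ 2 - L₁ ^ 2) * lam) ^ (k - 1) / ((k - 1).factorial : ℝ)) *
      ∑ l ∈ Finset.range (i - k), (Δ * (L₂ ^ 2 - r ^ 2) * lam) ^ l / (l.factorial : ℝ)) :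
    (∫ r in L₁..L₂, f r) =
      (∑ m ∈ Finset.Ico k i, Real.exp (-μ) * μ ^ m / (m.factorial : ℝ)) / C ∧
    (k = j → (∫ r in L₁..L₂, f r) = 1) := by
  set u : ℝ → ℝ := fun r => Δ * lam * (r ^ 2 - L₁ ^ 2)
  set g : ℝ → ℝ := fun x => x ^ (k - 1) / (k - 1)! * ∑ l ∈ range (i - k), (μ - x) ^ l / (l ! : ℝ)
  have hu_deriv (r : ℝ) : HasDerivAt u (2 * Δ * lam * r) r :=
    (((hasDerivAt_pow 2 r).sub_const (L₁ ^ 2)).const_mul (Δ * lam)).congr_deriv (by ring)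
  have hf_comp : f = fun r => exp (-μ) / C * ((g ∘ u) r * (2 * Δ * lam * r)) := by
    funext r
    rw [hf, show Δ * (r ^ 2 - L₁ ^ 2) * lam = u r by ring,
      show Δ * (L₂ ^ 2 - r ^ 2) * lam = μ - u r by rw [hμ]; ring]
    simp only [Function.comp_apply, g]
    ring
  have hmass : ∫ r in L₁..L₂, f r = exp (-μ) / C * ∑ m ∈ Ico k i, μ ^ m / m ! := by
    rw [hf_comp, integral_const_mul, integral_comp_mul_deriv (fun r _ => hu_deriv r)
      (by fun_prop) (by fun_prop), show u L₁ = 0 by ring, show u L₂ = μ by rw [hμ]; ring,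
      integral_pow_div_factorial_mul_sum_range, Nat.sub_add_cancel (hj.trans hjk),
      Nat.add_sub_cancel' hki.le]
  have hval : ∫ r in L₁..L₂, f r = (∑ m ∈ Ico k i, exp (-μ) * μ ^ m / m !) / C := by
    simp only [hmass, mul_div_assoc, ← mul_sum]
    ring
  refine ⟨hval, ?_⟩
  rintro rfl
  rw [hval, ← hC, div_self hC0]

/-- The marginal density `f_{d_k | S_{K₁}}` of Theorem 1 of the paper has
total mass `(∑_{m=k}^{i-1} e^{-μ} μ^m/m!) / C` over `[L₁, L₂]`; in
particular it integrates to 1 when `k = j`. -/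
theorem stmt_4 (Δ lam L₁ L₂ : ℝ) (hΔ : 0 < Δ) (hlam : 0 < lam)
    (hL₁ : 0 ≤ L₁) (hL : L₁ < L₂) (j k i : ℕ) (hj : 1 ≤ j) (hjk : j ≤ k) (hki : k < i)
    (μ C : ℝ) (hμ : μ = Δ * (L₂ ^ 2 - L₁ ^ 2) * lam)
    (hC : C = ∑ l ∈ Finset.Ico j i, Real.exp (-μ) * μ ^ l / (l.factorial : ℝ))
    (hC0 : C ≠ 0)
    (f : ℝ → ℝ)
    (hf : ∀ r, f r = (2 * Δ * lam * r / C) * Real.exp (-μ) *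
      ((Δ * (r ^ 2 - L₁ ^ 2) * lam) ^ (k - 1) / ((k - 1).factorial : ℝ)) *
      ∑ l ∈ Finset.range (i - k), (Δ * (L₂ ^ 2 - r ^ 2) * lam) ^ l / (l.factorial : ℝ)) :
    (∫ r in L₁..L₂, f r) =
      (∑ m ∈ Finset.Ico k i, Real.exp (-μ) * μ ^ m / (m.factorial : ℝ)) / C ∧
    (k = j → (∫ r in L₁..L₂, f r) = 1) :=
  stmt_4_general Δ lam L₁ L₂ j k i hj hjk hki μ C hμ hC hC0 f hf
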